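/- arXiv:2506.19104 — 2 statements merged into one kernel-verified Lean document; each statement's English description precedes it below -/
import Mathlib

section
/- Let a, b, c : ℝ → ℝ be continuous on [x₀, x₁], suppose there is a unique x* ∈ [x₀,x₁] with a(x*) = 0, suppose a(x) > 0 for x > x* and a(x) < 0 for x < x*, and suppose b(x*) = c(x*). Suppose there exist β, γ > 0 such that β·a(x) - (b(x) - b(x*)) ≥ 0 and γ·a(x) - (c(x) - c(x*)) ≥ 0 for x ≥ x*, while β·a(x) - (b(x) - b(x*)) ≤ 0 and γ·a(x) - (c(x) - c(x*)) ≤ 0 for x ≤ x*. Define z(x) = b(x*) - ReLU(β·a(x) - (b(x)-b(x*))) + β·ReLU(a(x)) + ReLU(-γ·a(x) + (c(x)-c(x*))) - γ·ReLU(-a(x)). Then z(x) = b(x) for x ∈ [x*, x₁] and z(x) = c(x) for x ∈ [x₀, x*]. -/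
noncomputable def ReLU (t : ℝ) : ℝ := max 0 t

theorem conditional_branching (x₀ x₁ xs : ℝ) (a b c : ℝ → ℝ)
    (ha : ContinuousOn a (Set.Icc x₀ x₁))
    (hb : ContinuousOn b (Set.Icc x₀ x₁))
    (hc : ContinuousOn c (Set.Icc x₀ x₁))
    (hxs : xs ∈ Set.Icc x₀ x₁)
    (hzero : a xs = 0)
    (huniq : ∀ x ∈ Set.Icc x₀ x₁, a x = 0 → x = xs)
    (hpos : ∀ x ∈ Set.Icc x₀ x₁, xs < x → 0 < a x)
    (hneg : ∀ x ∈ Set.Icc x₀ x₁, x < xs → a x < 0)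
    (hbc : b xs = c xs)
    (β γ : ℝ) (hβ : 0 < β) (hγ : 0 < γ)
    (hb_ge : ∀ x ∈ Set.Icc x₀ x₁, xs ≤ x → 0 ≤ β * a x - (b x - b xs))
    (hc_ge : ∀ x ∈ Set.Icc x₀ x₁, xs ≤ x → 0 ≤ γ * a x - (c x - c xs))
    (hb_le : ∀ x ∈ Set.Icc x₀ x₁, x ≤ xs → β * a x - (b x - b xs) ≤ 0)
    (hc_le : ∀ x ∈ Set.Icc x₀ x₁, x ≤ xs → γ * a x - (c x - c xs) ≤ 0)
    (z : ℝ → ℝ)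
    (hz : ∀ x, z x = b xs - ReLU (β * a x - (b x - b xs)) + β * ReLU (a x)
        + ReLU (-(γ * a x) + (c x - c xs)) - γ * ReLU (-(a x))) :
    (∀ x ∈ Set.Icc xs x₁, z x = b x) ∧ (∀ x ∈ Set.Icc x₀ xs, z x = c x) := by
  constructor
  · intro x hx
    have hx' : x ∈ Set.Icc x₀ x₁ := ⟨le_trans hxs.1 hx.1, hx.2⟩
    have ha0 : 0 ≤ a x := by
      rcases eq_or_lt_of_le hx.1 with h | h
      · rw [← h, hzero]
      · exact le_of_lt (hpos x hx' h)
    have h1 := hb_ge x hx' hx.1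
    have h2 := hc_ge x hx' hx.1
    rw [hz, ReLU, ReLU, ReLU, ReLU, max_eq_right h1, max_eq_right ha0,
      max_eq_left (by linarith), max_eq_left (by linarith)]
    ring
  · intro x hx
    have hx' : x ∈ Set.Icc x₀ x₁ := ⟨hx.1, le_trans hx.2 hxs.2⟩
    have ha0 : a x ≤ 0 := by
      rcases eq_or_lt_of_le hx.2 with h | h
      · rw [h, hzero]
      · exact le_of_lt (hneg x hx' h)
    have h1 := hb_le x hx' hx.2
    have h2 := hc_le x hx' hx.2
    rw [hz, ReLU, ReLU, ReLU, ReLU, max_eq_left (by linarith), max_eq_left ha0,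
      max_eq_right (by linarith), max_eq_right (by linarith)]
    linarith
end

section
/- Let g : [0,1] → [0,1] be the hat function g(x) = 2x for 0 ≤ x < 1/2 and g(x) = 2(1-x) for 1/2 ≤ x ≤ 1, and let g_s be the s-fold composition of g with itself. Then for all x ∈ [0,1] and all L ≥ 1, x² = x - Σ_{s=1}^{∞} 4^{-s} g_s(x); in particular the partial sum f_L(x) = x - Σ_{s=1}^{L} 4^{-s} g_s(x) satisfies |x² - f_L(x)| ≤ 4^{-L}. -/
/-- The hat function on [0,1], extended by 0 outside [0,1]. -/
noncomputable def g (x : ℝ) : ℝ :=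
  if x < 0 ∨ 1 < x then 0 else if x < 1/2 then 2 * x else 2 * (1 - x)

lemma g_eq_of_mem {x : ℝ} (hx : x ∈ Set.Icc (0:ℝ) 1) :
    g x = if x < 1/2 then 2 * x else 2 * (1 - x) := by
  unfold g
  rw [if_neg]
  push_neg
  exact ⟨hx.1, hx.2⟩

lemma g_mem {x : ℝ} (hx : x ∈ Set.Icc (0:ℝ) 1) : g x ∈ Set.Icc (0:ℝ) 1 := by
  obtain ⟨h0, h1⟩ := hx
  rw [g_eq_of_mem ⟨h0, h1⟩]
  split_ifs with h <;> constructor <;> nlinarith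

lemma g_iter_mem {x : ℝ} (hx : x ∈ Set.Icc (0:ℝ) 1) (n : ℕ) :
    g^[n] x ∈ Set.Icc (0:ℝ) 1 := by
  induction n with
  | zero => simpa using hx
  | succ n ih => rw [Function.iterate_succ_apply']; exact g_mem ih

lemma key {x : ℝ} (hx : x ∈ Set.Icc (0:ℝ) 1) :
    x - x^2 = g x / 4 + (g x - (g x)^2) / 4 := by
  obtain ⟨h0, h1⟩ := hx
  rw [g_eq_of_mem ⟨h0, h1⟩]
  split_ifs with h <;> ring

lemma four_zpow (s : ℕ) : (4:ℝ)^(-(s:ℤ)) = (1/4:ℝ)^s := by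
  rw [zpow_neg, zpow_natCast, one_div, inv_pow]

lemma main_id {x : ℝ} (hx : x ∈ Set.Icc (0:ℝ) 1) (L : ℕ) :
    x - x^2 = (∑ s ∈ Finset.Icc 1 L, (1/4:ℝ)^s * g^[s] x)
      + (1/4:ℝ)^L * (g^[L] x - (g^[L] x)^2) := by
  induction L with
  | zero => simp
  | succ L ih =>
    rw [Finset.sum_Icc_succ_top (Nat.one_le_iff_ne_zero.mpr (Nat.succ_ne_zero L))]
    rw [Function.iterate_succ_apply', ih]
    have hk := key (g_iter_mem hx L)
    set y := g^[L] x
    rw [hk]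
    ring

lemma p_bounds {y : ℝ} (hy : y ∈ Set.Icc (0:ℝ) 1) : 0 ≤ y - y^2 ∧ y - y^2 ≤ 1 := by
  obtain ⟨h0, h1⟩ := hy
  constructor <;> nlinarith

theorem telgarsky_square (x : ℝ) (hx : x ∈ Set.Icc (0:ℝ) 1) :
    x^2 = x - ∑' n : ℕ, (4:ℝ)^(-((n:ℤ) + 1)) * g^[n + 1] x ∧
    ∀ L : ℕ, 1 ≤ L →
      |x^2 - (x - ∑ s ∈ Finset.Icc 1 L, (4:ℝ)^(-(s:ℤ)) * g^[s] x)| ≤ (4:ℝ)^(-(L:ℤ)) := by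
  have hconv : ∀ s : ℕ, (4:ℝ)^(-((s:ℤ)+1)) = (1/4:ℝ)^(s+1) := by
    intro s
    have : (-((s:ℤ)+1)) = -((s+1 : ℕ) : ℤ) := by push_cast; ring
    rw [this, four_zpow]
  have hnonneg : ∀ n : ℕ, 0 ≤ (4:ℝ)^(-((n:ℤ)+1)) * g^[n+1] x := by
    intro n
    apply mul_nonneg (by positivity)
    exact (g_iter_mem hx (n+1)).1
  have hrange : ∀ N : ℕ, ∑ n ∈ Finset.range N, (4:ℝ)^(-((n:ℤ)+1)) * g^[n+1] x
      = ∑ s ∈ Finset.Icc 1 N, (1/4:ℝ)^s * g^[s] x := by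
    intro N
    induction N with
    | zero => simp
    | succ N ih =>
      rw [Finset.sum_range_succ, ih,
        Finset.sum_Icc_succ_top (Nat.one_le_iff_ne_zero.mpr (Nat.succ_ne_zero N)), hconv]
  have htend : Filter.Tendsto (fun N => ∑ n ∈ Finset.range N, (4:ℝ)^(-((n:ℤ)+1)) * g^[n+1] x)
      Filter.atTop (nhds (x - x^2)) := by
    have heq : ∀ N, ∑ n ∈ Finset.range N, (4:ℝ)^(-((n:ℤ)+1)) * g^[n+1] x
        = (x - x^2) - (1/4:ℝ)^N * (g^[N] x - (g^[N] x)^2) := by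
      intro N
      rw [hrange, main_id hx N]
      ring
    simp only [heq]
    have h0 : Filter.Tendsto (fun N : ℕ => (1/4:ℝ)^N * (g^[N] x - (g^[N] x)^2))
        Filter.atTop (nhds 0) := by
      apply squeeze_zero_norm (a := fun N : ℕ => (1/4:ℝ)^N)
      · intro N
        rw [norm_mul, norm_pow]
        have hb := p_bounds (g_iter_mem hx N)
        have : ‖(1/4:ℝ)‖ = 1/4 := by norm_num
        rw [this]
        calc ((1:ℝ)/4)^N * ‖g^[N] x - (g^[N] x)^2‖ ≤ (1/4:ℝ)^N * 1 := by
              apply mul_le_mul_of_nonneg_left _ (by positivity)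
              rw [Real.norm_eq_abs, abs_of_nonneg hb.1]; exact hb.2
          _ = (1/4:ℝ)^N := by ring
      · exact tendsto_pow_atTop_nhds_zero_of_lt_one (by norm_num) (by norm_num)
    simpa using Filter.Tendsto.sub (tendsto_const_nhds (x := x - x^2)) h0
  have hsum : HasSum (fun n : ℕ => (4:ℝ)^(-((n:ℤ)+1)) * g^[n+1] x) (x - x^2) :=
    (hasSum_iff_tendsto_nat_of_nonneg hnonneg _).mpr htend
  constructor
  · rw [hsum.tsum_eq]; ring
  · intro L _
    have hid := main_id hx L
    have hb := p_bounds (g_iter_mem hx L)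
    have hsum_eq : ∑ s ∈ Finset.Icc 1 L, (4:ℝ)^(-(s:ℤ)) * g^[s] x
        = ∑ s ∈ Finset.Icc 1 L, (1/4:ℝ)^s * g^[s] x := by
      apply Finset.sum_congr rfl; intro s _; rw [four_zpow]
    rw [hsum_eq, four_zpow]
    have : x^2 - (x - ∑ s ∈ Finset.Icc 1 L, (1/4:ℝ)^s * g^[s] x)
        = -((1/4:ℝ)^L * (g^[L] x - (g^[L] x)^2)) := by
      rw [eq_neg_iff_add_eq_zero]; nlinarith [hid]
    rw [this, abs_neg, abs_mul, abs_of_nonneg (by positivity : (0:ℝ) ≤ (1/4:ℝ)^L),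
      abs_of_nonneg hb.1]
    nlinarith [pow_nonneg (by norm_num : (0:ℝ) ≤ 1/4) L, hb.2]
end
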